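/- Let f be a polynomial vector field and H = ⋃_{i=1}^I ⋂_{j=1}^{J_i} {x : p_{ij}(x) ▷ 0} with ▷ ∈ {≥,>} a semi-algebraic set in disjunctive normal form. Then In_f(H) = ⋃_{i=1}^I ⋂_{j=1}^{J_i} In_f({x : p_{ij}(x) ▷ 0}). In particular, In_f commutes with the finite unions and intersections in this DNF representation. -/

import Mathlib

/-!
Along a trajectory `x(t)` of `f`, the derivative of `t ↦ q(x(t))` is `t ↦ (L_f q)(x(t))`, with
`L_f = ∑ⱼ fⱼ ∂ⱼ` the Lie derivative. By Hilbert's basis theorem some `L_f^N q` is a polynomial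
combination of `q, L_f q, …, L_f^{N-1} q`, so the vector of these `N` functions of `t` solves a
linear ODE with continuous coefficients. If it vanishes at `t = 0`, Grönwall's inequality makes
`q(x(t))` vanish for all `t ≥ 0`; otherwise the first derivative not vanishing at `0` fixes the
sign of `q(x(t))` for small `t > 0`. This replaces the appeal to analyticity: every atom
`{q ▷ 0}` is either entered or left immediately. Since `In_f(A)` says that `x(t) ∈ A` eventually
along `𝓝[>] 0`, it commutes with finite intersections, and the dichotomy on the atoms lets it
commute with the finite union as well.
-/

/-- `φ` is a global flow of the polynomial vector field `f`. -/
def IsPolyFlow {n : ℕ} (f : Fin n → MvPolynomial (Fin n) ℝ)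
    (φ : (Fin n → ℝ) → ℝ → (Fin n → ℝ)) : Prop :=
  (∀ x₀, φ x₀ 0 = x₀) ∧
    ∀ x₀ t (i : Fin n),
      HasDerivAt (fun s => φ x₀ s i) (MvPolynomial.eval (φ x₀ t) (f i)) t

/-- `In_f(A)`: points whose forward trajectory enters `A` immediately. -/
def InSet {n : ℕ} (φ : (Fin n → ℝ) → ℝ → (Fin n → ℝ)) (A : Set (Fin n → ℝ)) :
    Set (Fin n → ℝ) :=
  {x₀ | ∃ ε > 0, ∀ t ∈ Set.Ioo (0:ℝ) ε, φ x₀ t ∈ A}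

/-- `Out_f(A)`: points whose forward trajectory leaves `A` immediately. -/
def OutSet {n : ℕ} (φ : (Fin n → ℝ) → ℝ → (Fin n → ℝ)) (A : Set (Fin n → ℝ)) :
    Set (Fin n → ℝ) :=
  {x₀ | ∃ ε > 0, ∀ t ∈ Set.Ioo (0:ℝ) ε, φ x₀ t ∉ A}

/-- The atomic semi-algebraic set `{x | p(x) ▷ 0}` where `▷` is `>` if `strict`
and `≥` otherwise. -/
def atomSet {n : ℕ} (p : MvPolynomial (Fin n) ℝ) (strict : Bool) :
    Set (Fin n → ℝ) :=
  if strict then {x | 0 < MvPolynomial.eval x p} else {x | 0 ≤ MvPolynomial.eval x p}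

open MvPolynomial Set Filter Topology

noncomputable def lieDeriv {R σ : Type*} [CommSemiring R] [Fintype σ]
    (f : σ → MvPolynomial σ R) (q : MvPolynomial σ R) : MvPolynomial σ R :=
  ∑ j, f j * pderiv j q

theorem hasDerivAt_eval_comp {σ : Type*} [Fintype σ] {x : ℝ → σ → ℝ} {x' : σ → ℝ} {t : ℝ}
    (hx : ∀ i, HasDerivAt (fun s => x s i) (x' i) t) (q : MvPolynomial σ ℝ) :
    HasDerivAt (fun s => eval (x s) q) (∑ i, x' i * eval (x t) (pderiv i q)) t := by
  classical
  induction q using MvPolynomial.induction_on with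
  | C a => simpa using hasDerivAt_const t a
  | add q r hq hr => simpa [mul_add, Finset.sum_add_distrib] using hq.fun_add hr
  | mul_X q j hq =>
    simp only [map_mul, eval_X]
    refine (hq.fun_mul (hx j)).congr_deriv ?_
    simp [pderiv_X, Pi.single_apply, mul_add, Finset.sum_add_distrib, Finset.mul_sum, apply_ite,
      mul_comm, mul_left_comm, add_comm]

theorem exists_eq_sum_mul_of_isNoetherianRing {R : Type*} [CommRing R] [IsNoetherianRing R]
    (P : ℕ → R) : ∃ (N : ℕ) (c : Fin N → R), P N = ∑ i, c i * P i := by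
  let I : ℕ →o Ideal R := ⟨fun k => Ideal.span (range fun i : Fin k => P i), fun a b hab =>
    Ideal.span_mono <| range_subset_iff.2 fun i => ⟨Fin.castLE hab i, rfl⟩⟩
  obtain ⟨N, hN⟩ := monotone_stabilizes_iff_noetherian.mpr (inferInstance : IsNoetherian R R) I
  have hmem : P N ∈ I N := by
    rw [hN (N + 1) N.le_succ]
    exact Ideal.subset_span ⟨Fin.last N, rfl⟩
  obtain ⟨c, hc⟩ := Ideal.mem_span_range_iff_exists_fun.1 hmem
  exact ⟨N, c, hc.symm⟩

section Chain

variable {a : ℝ}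

theorem eventually_pos_of_hasDerivAt {g g' : ℝ → ℝ} (hg : ∀ t, HasDerivAt g (g' t) t)
    (h0 : g a = 0) (h' : ∀ᶠ t in 𝓝[>] a, 0 < g' t) : ∀ᶠ t in 𝓝[>] a, 0 < g t := by
  obtain ⟨u, hu, hsub⟩ := mem_nhdsGT_iff_exists_Ioo_subset.1 h'
  have hmono : StrictMonoOn g (Ico a u) :=
    strictMonoOn_of_deriv_pos (convex_Ico a u)
      (fun t _ => (hg t).continuousAt.continuousWithinAt) fun t ht => by
        rw [interior_Ico] at ht
        rw [(hg t).deriv]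
        exact hsub ht
  refine mem_nhdsGT_iff_exists_Ioo_subset.2 ⟨u, hu, fun t ht => ?_⟩
  simpa [h0] using hmono ⟨le_rfl, hu⟩ ⟨ht.1.le, ht.2⟩ ht.1

variable {g : ℕ → ℝ → ℝ}

theorem eventually_pos_of_chain (hg : ∀ k t, HasDerivAt (g k) (g (k + 1) t) t) {k : ℕ}
    (hlt : ∀ i < k, g i a = 0) (hk : 0 < g k a) : ∀ᶠ t in 𝓝[>] a, 0 < g 0 t := by
  induction k generalizing g with
  | zero =>
    exact ((hg 0 a).continuousAt.eventually (lt_mem_nhds hk)).filter_mono nhdsWithin_le_nhds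
  | succ k ih =>
    refine eventually_pos_of_hasDerivAt (hg 0) (hlt 0 k.succ_pos) ?_
    exact ih (g := fun i => g (i + 1)) (fun i t => hg (i + 1) t)
      (fun i hi => hlt (i + 1) (by omega)) hk

theorem eq_zero_of_chain_of_eq_sum (hg : ∀ k t, HasDerivAt (g k) (g (k + 1) t) t) {N : ℕ}
    (c : Fin N → ℝ → ℝ) (hc : ∀ i, Continuous (c i)) (hrel : ∀ t, g N t = ∑ i, c i t * g i t)
    (h0 : ∀ i < N, g i a = 0) : ∀ t ∈ Ici a, g 0 t = 0 := by
  rcases N with _ | N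
  · simpa using fun t (_ : a ≤ t) => hrel t
  intro b hb
  obtain ⟨C, hC⟩ := (isCompact_Icc (a := a) (b := b)).bddAbove_image
    (f := fun s => ∑ i, ‖c i s‖) (by fun_prop)
  let Y : ℝ → Fin (N + 1) → ℝ := fun s i => g i s
  have hY : ∀ s, HasDerivAt Y (fun i => g (i + 1) s) s := fun s => hasDerivAt_pi.2 fun i => hg i s
  have hbound : ∀ s ∈ Ico a b, ‖fun i : Fin (N + 1) => g (i + 1) s‖ ≤ max 1 C * ‖Y s‖ := by
    intro s hs
    refine (pi_norm_le_iff_of_nonneg (by positivity)).2 fun i => ?_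
    by_cases hi : (i : ℕ) + 1 < N + 1
    · calc ‖g (i + 1) s‖ = ‖Y s ⟨i + 1, hi⟩‖ := rfl
        _ ≤ ‖Y s‖ := norm_le_pi_norm _ _
        _ ≤ max 1 C * ‖Y s‖ := le_mul_of_one_le_left (norm_nonneg _) (le_max_left _ _)
    · calc ‖g (i + 1) s‖ = ‖∑ j, c j s * Y s j‖ := by rw [show (i : ℕ) + 1 = N + 1 by omega, hrel]
        _ ≤ ∑ j, ‖c j s‖ * ‖Y s‖ := (norm_sum_le _ _).trans <| Finset.sum_le_sum fun j _ => by
            rw [norm_mul]; gcongr; exact norm_le_pi_norm _ _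
        _ = (∑ j, ‖c j s‖) * ‖Y s‖ := (Finset.sum_mul _ _ _).symm
        _ ≤ max 1 C * ‖Y s‖ := by
            gcongr
            exact (hC ⟨s, Ico_subset_Icc_self hs, rfl⟩).trans (le_max_right _ _)
  have hY0 := eq_zero_of_abs_deriv_le_mul_abs_self_of_eq_zero_right
    (fun s _ => (hY s).continuousAt.continuousWithinAt) (fun s _ => (hY s).hasDerivWithinAt)
    (funext fun i => h0 i i.2) hbound b ⟨hb, le_rfl⟩
  exact congrFun hY0 0

theorem chain_trichotomy (hg : ∀ k t, HasDerivAt (g k) (g (k + 1) t) t) {N : ℕ}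
    (c : Fin N → ℝ → ℝ) (hc : ∀ i, Continuous (c i)) (hrel : ∀ t, g N t = ∑ i, c i t * g i t) :
    (∀ᶠ t in 𝓝[>] a, 0 < g 0 t) ∨ (∀ᶠ t in 𝓝[>] a, g 0 t < 0) ∨ ∀ᶠ t in 𝓝[>] a, g 0 t = 0 := by
  classical
  by_cases hne : ∃ k, g k a ≠ 0
  · have hlt : ∀ i < Nat.find hne, g i a = 0 := fun i hi => not_not.1 (Nat.find_min hne hi)
    rcases (Nat.find_spec hne).lt_or_gt with hneg | hpos
    · refine Or.inr (Or.inl ?_)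
      have := eventually_pos_of_chain (g := fun i t => -g i t) (fun i t => (hg i t).neg)
        (fun i hi => by simp [hlt i hi]) (neg_pos.2 hneg)
      exact this.mono fun t ht => neg_pos.1 ht
    · exact Or.inl (eventually_pos_of_chain hg hlt hpos)
  · push Not at hne
    exact Or.inr <| Or.inr <| eventually_nhdsWithin_of_forall fun t ht =>
      eq_zero_of_chain_of_eq_sum hg c hc hrel (fun i _ => hne i) t (Ioi_subset_Ici_self ht)

end Chain

section Flow

variable {n : ℕ} {f : Fin n → MvPolynomial (Fin n) ℝ} {φ : (Fin n → ℝ) → ℝ → (Fin n → ℝ)}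

theorem IsPolyFlow.continuous (hφ : IsPolyFlow f φ) (x₀ : Fin n → ℝ) : Continuous (φ x₀) :=
  continuous_pi fun i => continuous_iff_continuousAt.2 fun t => (hφ.2 x₀ t i).continuousAt

theorem IsPolyFlow.hasDerivAt_eval (hφ : IsPolyFlow f φ) (x₀ : Fin n → ℝ) (t : ℝ)
    (q : MvPolynomial (Fin n) ℝ) :
    HasDerivAt (fun s => eval (φ x₀ s) q) (eval (φ x₀ t) (lieDeriv f q)) t := by
  simpa [lieDeriv, map_sum] using hasDerivAt_eval_comp (hφ.2 x₀ t) q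

theorem IsPolyFlow.eval_trichotomy (hφ : IsPolyFlow f φ) (x₀ : Fin n → ℝ)
    (q : MvPolynomial (Fin n) ℝ) :
    (∀ᶠ t in 𝓝[>] 0, 0 < eval (φ x₀ t) q) ∨ (∀ᶠ t in 𝓝[>] 0, eval (φ x₀ t) q < 0) ∨
      ∀ᶠ t in 𝓝[>] 0, eval (φ x₀ t) q = 0 := by
  obtain ⟨N, c, hc⟩ := exists_eq_sum_mul_of_isNoetherianRing fun k => (lieDeriv f)^[k] q
  refine chain_trichotomy (g := fun k t => eval (φ x₀ t) ((lieDeriv f)^[k] q))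
    (fun k t => ?_) (fun i t => eval (φ x₀ t) (c i))
    (fun i => (continuous_eval _).comp (hφ.continuous x₀)) (fun t => ?_)
  · simpa only [Function.iterate_succ_apply'] using hφ.hasDerivAt_eval x₀ t _
  · simp only [hc, map_sum, map_mul]

end Flow

section InSet

variable {n : ℕ} {φ : (Fin n → ℝ) → ℝ → (Fin n → ℝ)}

theorem mem_inSet_iff {A : Set (Fin n → ℝ)} {x₀ : Fin n → ℝ} :
    x₀ ∈ InSet φ A ↔ ∀ᶠ t in 𝓝[>] 0, φ x₀ t ∈ A := by
  simp only [InSet, mem_ofPred_eq, Filter.Eventually, mem_nhdsGT_iff_exists_Ioo_subset, mem_Ioi,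
    subset_def, gt_iff_lt]

theorem outSet_eq_inSet_compl (A : Set (Fin n → ℝ)) : OutSet φ A = InSet φ Aᶜ := rfl

theorem IsPolyFlow.mem_inSet_or_mem_outSet_atomSet {f : Fin n → MvPolynomial (Fin n) ℝ}
    (hφ : IsPolyFlow f φ) (x₀ : Fin n → ℝ) (q : MvPolynomial (Fin n) ℝ) (strict : Bool) :
    x₀ ∈ InSet φ (atomSet q strict) ∨ x₀ ∈ OutSet φ (atomSet q strict) := by
  rw [outSet_eq_inSet_compl, mem_inSet_iff, mem_inSet_iff]
  rcases hφ.eval_trichotomy x₀ q with h | h | h <;> cases strict <;>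
    simp only [atomSet, Bool.false_eq_true, if_false, if_true, mem_ofPred_eq, mem_compl_iff,
      not_le, not_lt]
  · exact Or.inl (h.mono fun _ => le_of_lt)
  · exact Or.inl h
  · exact Or.inr h
  · exact Or.inr (h.mono fun _ => le_of_lt)
  · exact Or.inl (h.mono fun _ => ge_of_eq)
  · exact Or.inr (h.mono fun _ => le_of_eq)

theorem inSet_iUnion_iInter {ι : Type*} [Finite ι] {κ : ι → Type*} [∀ i, Finite (κ i)]
    (A : ∀ i, κ i → Set (Fin n → ℝ))
    (hA : ∀ i j x₀, x₀ ∈ InSet φ (A i j) ∨ x₀ ∈ OutSet φ (A i j)) :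
    InSet φ (⋃ i, ⋂ j, A i j) = ⋃ i, ⋂ j, InSet φ (A i j) := by
  ext x₀
  simp only [mem_iUnion, mem_iInter, mem_inSet_iff]
  constructor
  · intro hmem
    refine not_forall_not.1 fun hnot => ?_
    choose j hj using fun i => not_forall.1 (hnot i)
    have hout : ∀ i, ∀ᶠ t in 𝓝[>] 0, φ x₀ t ∉ A i (j i) := fun i => by
      simpa only [outSet_eq_inSet_compl, mem_inSet_iff, mem_compl_iff, hj i, false_or]
        using hA i (j i) x₀
    obtain ⟨t, ⟨i, hi⟩, hti⟩ := (hmem.and (eventually_all.2 hout)).exists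
    exact hti i (hi (j i))
  · rintro ⟨i, hi⟩
    exact (eventually_all.2 hi).mono fun t ht => ⟨i, ht⟩

end InSet

/-- `In_f` commutes with the finite unions and intersections in a DNF
representation of a semi-algebraic set. -/
theorem in_set_dnf
    {n I : ℕ} (f : Fin n → MvPolynomial (Fin n) ℝ)
    (φ : (Fin n → ℝ) → ℝ → (Fin n → ℝ)) (hφ : IsPolyFlow f φ)
    (J : Fin I → ℕ)
    (p : ∀ i : Fin I, Fin (J i) → MvPolynomial (Fin n) ℝ)
    (rel : ∀ i : Fin I, Fin (J i) → Bool) :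
    InSet φ (⋃ i, ⋂ j, atomSet (p i j) (rel i j))
      = ⋃ i, ⋂ j, InSet φ (atomSet (p i j) (rel i j)) :=
  inSet_iUnion_iInter _ fun i j x₀ => hφ.mem_inSet_or_mem_outSet_atomSet x₀ (p i j) (rel i j)
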